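/- Let K be a local field and n a positive integer with char(K) ∤ n. Let P ∈ K[t] be a nonzero polynomial. Then for every t₀ ∈ ℙ¹(K) there is a punctured neighbourhood U_{t₀} of t₀ such that, for all t ∈ U_{t₀} with P(t) ≠ 0, the class of P(t) in K^*/(K^*)^n depends only on the class of t − t₀ in K^*/(K^*)^n (with 1/t in place of t − t₀ when t₀ = ∞). -/

import Mathlib

/-!
Near a finite point `t₀` write `P(t) = (t - t₀)^m (c + (t - t₀) T(t - t₀))` with `c ≠ 0`; near `∞`
write `P(t) = t^d P̃(1/t)` with `P̃` the reversed polynomial. Both cases reduce to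
`Q(x) = x^m (c + x T(x))` for `x` close to `0`. Once `v(x T(x)) > 2 v(n) + v(c)`, the ratio of
two values of `c + x T(x)` is within `v > 2 v(n)` of `1`, hence an `n`-th power by Hensel's lemma
(Newton's iteration for `X^n - u`, which converges because `K` is complete). So the class of
`Q(x)` modulo `n`-th powers is that of `x^m`, determined by the class of `x`.
-/

/-- A (nonarchimedean) local field structure on a field `K`: a discrete valuation
`v : K → ℤ ∪ {⊤}` (with `v 0 = ⊤`), normalized so that `v (K^*) = ℤ`, with respect to
which `K` is complete, and whose residue field is finite. -/
structure IsLocalField {K : Type*} [Field K] (v : K → WithTop ℤ) : Prop where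
  map_zero : v 0 = ⊤
  ne_top : ∀ x : K, x ≠ 0 → v x ≠ ⊤
  map_mul : ∀ x y : K, v (x * y) = v x + v y
  min_le_add : ∀ x y : K, min (v x) (v y) ≤ v (x + y)
  exists_eq : ∀ k : ℤ, ∃ x : K, v x = (k : WithTop ℤ)
  complete : ∀ a : ℕ → K,
      (∀ k : ℤ, ∃ N : ℕ, ∀ m m' : ℕ, N ≤ m → N ≤ m' → (k : WithTop ℤ) ≤ v (a m - a m')) →
      ∃ L : K, ∀ k : ℤ, ∃ N : ℕ, ∀ m : ℕ, N ≤ m → (k : WithTop ℤ) ≤ v (a m - L)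
  finite_residue : ∃ T : Finset K, ∀ x : K, 0 ≤ v x → ∃ t ∈ T, (1 : WithTop ℤ) ≤ v (x - t)

lemma WithTop.intCast_add_one_le_of_lt {z : ℤ} {x : WithTop ℤ} (h : (z : WithTop ℤ) < x) :
    ((z + 1 : ℤ) : WithTop ℤ) ≤ x := by
  induction x with
  | top => exact le_top
  | coe x => exact_mod_cast (by exact_mod_cast h : z < x)

theorem Polynomial.exists_eval_eq_pow_mul_add {R : Type*} [CommRing R] {Q : Polynomial R}
    (hQ : Q ≠ 0) : ∃ (m : ℕ) (c : R) (T : Polynomial R), c ≠ 0 ∧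
      ∀ x, Q.eval x = x ^ m * (c + x * T.eval x) := by
  obtain ⟨q, hQq, hq⟩ := Q.exists_eq_pow_rootMultiplicity_mul_and_not_dvd hQ 0
  refine ⟨Q.rootMultiplicity 0, q.coeff 0, q.divX, fun h => hq ?_, fun x => ?_⟩
  · simpa [Polynomial.X_dvd_iff] using h
  · conv_lhs => rw [hQq, ← q.divX_mul_X_add]
    simp only [map_zero, sub_zero, Polynomial.eval_mul, Polynomial.eval_pow, Polynomial.eval_X,
      Polynomial.eval_add, Polynomial.eval_C]
    ring

theorem Polynomial.eval_eq_pow_mul_eval_reverse {K : Type*} [Field K] (P : Polynomial K) {t : K}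
    (ht : t ≠ 0) : P.eval t = t ^ P.natDegree * P.reverse.eval t⁻¹ := by
  let := invertibleOfNonzero ht
  rw [← invOf_eq_inv t, mul_comm]
  exact (Polynomial.eval₂_reverse_mul_pow (RingHom.id K) t P).symm

namespace AddValuation

variable {K : Type*} [Field K] (v : AddValuation K (WithTop ℤ))

def IsComplete : Prop :=
  ∀ a : ℕ → K,
    (∀ k : ℤ, ∃ N : ℕ, ∀ m m' : ℕ, N ≤ m → N ≤ m' → (k : WithTop ℤ) ≤ v (a m - a m')) →
    ∃ L : K, ∀ k : ℤ, ∃ N : ℕ, ∀ m : ℕ, N ≤ m → (k : WithTop ℤ) ≤ v (a m - L)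

theorem eq_zero_of_forall_natCast_le {x : K} (h : ∀ m : ℕ, ((m : ℤ) : WithTop ℤ) ≤ v x) :
    x = 0 := by
  by_contra hx
  obtain ⟨z, hz⟩ := WithTop.ne_top_iff_exists.mp (v.ne_top_iff.mpr hx)
  have h' := h (z.toNat + 1)
  rw [← hz] at h'
  have : ((z.toNat + 1 : ℕ) : ℤ) ≤ z := by exact_mod_cast h'
  omega

theorem map_natCast_nonneg (n : ℕ) : 0 ≤ v (n : K) := by
  induction n with
  | zero => simp
  | succ n ih => exact Nat.cast_succ (R := K) n ▸ v.map_le_add ih v.map_one.ge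

theorem map_eq_zero_of_map_pow_eq_zero {n : ℕ} (hn : n ≠ 0) {x : K} (h : v (x ^ n) = 0) :
    v x = 0 := by
  induction hx : v x with
  | top => simp [v.top_iff.mp hx, hn] at h
  | coe z =>
    rw [map_pow, hx, ← WithTop.coe_nsmul] at h
    have : (n : ℤ) * z = 0 := by exact_mod_cast h
    exact_mod_cast (mul_eq_zero.mp this).resolve_left (by exact_mod_cast hn)

theorem map_sub_le_map_pow_sub_pow {x y : K} (hx : 0 ≤ v x) (hy : 0 ≤ v y) (n : ℕ) :
    v (x - y) ≤ v (x ^ n - y ^ n) := by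
  rw [← geom_sum₂_mul, map_mul]
  refine le_add_of_nonneg_left (v.map_le_sum fun i _ => ?_)
  rw [map_mul, map_pow, map_pow]
  exact add_nonneg (nsmul_nonneg hx _) (nsmul_nonneg hy _)

theorem exists_add_pow_succ_eq {b y : K} (hb : 0 ≤ v b) (hy : 0 ≤ v y) (N : ℕ) :
    ∃ G, 0 ≤ v G ∧ (b + y) ^ (N + 1) = b ^ (N + 1) + (N + 1) * b ^ N * y + y ^ 2 * G := by
  induction N with
  | zero => exact ⟨0, by simp, by ring⟩
  | succ N ih =>
    obtain ⟨G, hG, hexp⟩ := ih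
    refine ⟨b * G + (N + 1) * b ^ N + y * G, ?_, by rw [pow_succ, hexp]; push_cast; ring⟩
    have hN : 0 ≤ v ((N + 1 : ℕ) : K) := v.map_natCast_nonneg _
    push_cast at hN
    refine v.map_le_add (v.map_le_add ?_ ?_) ?_ <;> rw [map_mul]
    · exact add_nonneg hb hG
    · exact add_nonneg hN (by rw [map_pow]; exact nsmul_nonneg hb _)
    · exact add_nonneg hy hG

theorem exists_le_map_eval (T : Polynomial K) :
    ∃ C : ℤ, ∀ x, 0 ≤ v x → (C : WithTop ℤ) ≤ v (T.eval x) := by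
  induction T using Polynomial.induction_on' with
  | add p q hp hq =>
    obtain ⟨C, hC⟩ := hp
    obtain ⟨D, hD⟩ := hq
    refine ⟨min C D, fun x hx => ?_⟩
    rw [Polynomial.eval_add]
    exact v.map_le_add ((WithTop.coe_le_coe.mpr (min_le_left C D)).trans (hC x hx))
      ((WithTop.coe_le_coe.mpr (min_le_right C D)).trans (hD x hx))
  | monomial i a =>
    induction ha : v a with
    | top => exact ⟨0, fun x _ => by simp [v.top_iff.mp ha]⟩
    | coe C =>
      refine ⟨C, fun x hx => ?_⟩
      rw [Polynomial.eval_monomial, map_mul, map_pow, ha]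
      exact le_add_of_nonneg_right (nsmul_nonneg hx _)

theorem exists_lt_map_mul_eval (T : Polynomial K) (γ : ℤ) :
    ∃ k : ℤ, ∀ x, (k : WithTop ℤ) ≤ v x → (γ : WithTop ℤ) < v (x * T.eval x) := by
  obtain ⟨C, hC⟩ := v.exists_le_map_eval T
  refine ⟨max 0 (γ + 1 - C), fun x hx => ?_⟩
  have hx0 : 0 ≤ v x := le_trans (by exact_mod_cast le_max_left _ _) hx
  calc (γ : WithTop ℤ) < ((max 0 (γ + 1 - C) + C : ℤ) : WithTop ℤ) := by
        exact_mod_cast (by omega)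
    _ ≤ v x + v (T.eval x) := by push_cast; exact add_le_add hx (hC x hx0)
    _ = v (x * T.eval x) := (v.map_mul _ _).symm

variable {v}

theorem exists_limit_of_le_map_succ_sub (hv : v.IsComplete) {a : ℕ → K} {c : ℤ}
    (h : ∀ m : ℕ, ((c + m : ℤ) : WithTop ℤ) ≤ v (a (m + 1) - a m)) :
    ∃ L, ∀ m : ℕ, ((c + m : ℤ) : WithTop ℤ) ≤ v (a m - L) := by
  have tail : ∀ m m' : ℕ, m ≤ m' → ((c + m : ℤ) : WithTop ℤ) ≤ v (a m' - a m) := by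
    intro m m' hmm'
    induction m', hmm' using Nat.le_induction with
    | base => simp
    | succ m' hmm' ih =>
      rw [← sub_add_sub_cancel _ (a m')]
      exact v.map_le_add ((WithTop.coe_le_coe.mpr (by omega)).trans (h m')) ih
  obtain ⟨L, hL⟩ := hv a fun k => ⟨(k - c).toNat, fun m m' hm hm' => by
    rcases le_total m m' with hle | hle
    · rw [map_sub_swap]; exact (WithTop.coe_le_coe.mpr (by omega)).trans (tail m m' hle)
    · exact (WithTop.coe_le_coe.mpr (by omega)).trans (tail m' m hle)⟩
  refine ⟨L, fun m => ?_⟩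
  obtain ⟨N, hN⟩ := hL (c + m)
  rw [← sub_add_sub_cancel _ (a (max N m))]
  refine v.map_le_add ?_ (hN _ (le_max_left N m))
  rw [map_sub_swap]
  exact tail m _ (le_max_right N m)

def newtonPow (n : ℕ) (u b : K) : K := b - (b ^ n - u) / (n * b ^ (n - 1))

theorem map_eq_zero_of_pos_map_pow_sub {n : ℕ} (hn : n ≠ 0) {u b : K} (hu : v u = 0)
    (hb : 0 < v (b ^ n - u)) : v b = 0 :=
  v.map_eq_zero_of_map_pow_eq_zero hn ((v.map_eq_of_lt_sub (hu ▸ hb)).trans hu)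

theorem newtonPow_spec {n : ℕ} (hn : (n : K) ≠ 0) {e k : ℤ} (he : v n = e) {u b : K}
    (hu : v u = 0) (hk : 2 * e < k) (hb : (k : WithTop ℤ) ≤ v (b ^ n - u)) :
    ((k - e : ℤ) : WithTop ℤ) ≤ v (newtonPow n u b - b) ∧
      ((k + 1 : ℤ) : WithTop ℤ) ≤ v (newtonPow n u b ^ n - u) := by
  have he0 : 0 ≤ e := by exact_mod_cast he ▸ v.map_natCast_nonneg n
  obtain ⟨N, rfl⟩ : ∃ N, n = N + 1 := Nat.exists_eq_succ_of_ne_zero (by rintro rfl; simp at hn)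
  have hvb : v b = 0 :=
    map_eq_zero_of_pos_map_pow_sub N.succ_ne_zero hu
      ((WithTop.coe_lt_coe.mpr (by omega)).trans_le hb)
  set D : K := (N + 1 : ℕ) * b ^ N
  have hD : v D = e := by simp only [D, map_mul, map_pow, hvb, he, nsmul_zero, add_zero]
  have hD0 : D ≠ 0 := v.ne_top_iff.mp (by simp [hD])
  set d := (b ^ (N + 1) - u) / D
  have hdD : D * d = b ^ (N + 1) - u := mul_div_cancel₀ _ hD0
  have hd : ((k - e : ℤ) : WithTop ℤ) ≤ v d := by
    have hDd : ((e + (k - e) : ℤ) : WithTop ℤ) ≤ v D + v d := by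
      rw [← map_mul, hdD]; exact (WithTop.coe_le_coe.mpr (by omega)).trans hb
    rw [hD, WithTop.coe_add] at hDd
    exact (WithTop.add_le_add_iff_left WithTop.coe_ne_top).mp hDd
  have hstep : newtonPow (N + 1) u b - b = -d := by
    simp only [newtonPow, D, d, Nat.add_sub_cancel]; ring
  refine ⟨by rwa [hstep, map_neg], ?_⟩
  obtain ⟨G, hG, hexp⟩ := v.exists_add_pow_succ_eq hvb.ge
    (by rw [map_neg]; exact (WithTop.coe_le_coe.mpr (by omega)).trans hd) N
  -- the linear term of the binomial expansion cancels `b ^ n - u`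
  have hnext : newtonPow (N + 1) u b ^ (N + 1) - u = d ^ 2 * G := by
    rw [← sub_add_cancel (newtonPow (N + 1) u b) b, hstep, add_comm, hexp]
    simp only [D] at hdD
    push_cast at hdD
    linear_combination (-1 : K) * hdD
  rw [hnext, map_mul, map_pow]
  calc ((k + 1 : ℤ) : WithTop ℤ) ≤ ((2 * (k - e) : ℤ) : WithTop ℤ) :=
        WithTop.coe_le_coe.mpr (by omega)
    _ = 2 • ((k - e : ℤ) : WithTop ℤ) + 0 := by
        rw [add_zero, ← WithTop.coe_nsmul, nsmul_eq_mul, Nat.cast_ofNat]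
    _ ≤ 2 • v d + v G := add_le_add (nsmul_le_nsmul_right hd 2) hG

theorem exists_pow_eq_of_lt_map_sub_one (hv : v.IsComplete) {n : ℕ} (hn : (n : K) ≠ 0) {u : K}
    (hu : v n + v n < v (u - 1)) : ∃ w, w ^ n = u := by
  obtain ⟨e, he⟩ := WithTop.ne_top_iff_exists.mp (v.ne_top_iff.mpr hn)
  have he0 : 0 ≤ e := by exact_mod_cast he ▸ v.map_natCast_nonneg n
  have hn0 : n ≠ 0 := by rintro rfl; simp at hn
  rw [← he, ← WithTop.coe_add] at hu
  have hu0 : v u = 0 :=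
    (v.map_eq_of_lt_sub (v.map_one ▸ (WithTop.coe_le_coe.mpr (by omega)).trans_lt hu)).trans
      v.map_one
  set a : ℕ → K := fun m => (newtonPow n u)^[m] 1
  have ha_succ : ∀ m, a (m + 1) = newtonPow n u (a m) := fun m =>
    Function.iterate_succ_apply' _ _ _
  have ha : ∀ m : ℕ, ((2 * e + 1 + m : ℤ) : WithTop ℤ) ≤ v (a m ^ n - u) := by
    intro m
    induction m with
    | zero =>
      simpa [a, map_sub_swap, two_mul] using WithTop.intCast_add_one_le_of_lt hu
    | succ m ih =>
      rw [ha_succ]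
      exact (WithTop.coe_le_coe.mpr (by omega)).trans
        (newtonPow_spec hn he.symm hu0 (by omega) ih).2
  have hstep : ∀ m : ℕ, ((e + 1 + m : ℤ) : WithTop ℤ) ≤ v (a (m + 1) - a m) := fun m => by
    rw [ha_succ]
    exact (WithTop.coe_le_coe.mpr (by omega)).trans
      (newtonPow_spec hn he.symm hu0 (by omega) (ha m)).1
  obtain ⟨L, hL⟩ := exists_limit_of_le_map_succ_sub hv hstep
  refine ⟨L, sub_eq_zero.mp (v.eq_zero_of_forall_natCast_le fun m => ?_)⟩
  have ham : v (a m) = 0 := map_eq_zero_of_pos_map_pow_sub hn0 hu0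
    ((WithTop.coe_lt_coe.mpr (by omega)).trans_le (ha m))
  have hL0 : 0 ≤ v L := by
    rw [← sub_sub_cancel (a m) L]
    exact v.map_le_sub ham.ge ((WithTop.coe_le_coe.mpr (by omega)).trans (hL m))
  rw [← sub_add_sub_cancel (L ^ n) (a m ^ n) u]
  refine v.map_le_add ?_ ((WithTop.coe_le_coe.mpr (by omega)).trans (ha m))
  rw [map_sub_swap]
  exact (WithTop.coe_le_coe.mpr (by omega)).trans
    ((hL m).trans (v.map_sub_le_map_pow_sub_pow ham.ge hL0 n))

theorem exists_add_eq_pow_mul_add (hv : v.IsComplete) {n : ℕ} (hn : (n : K) ≠ 0) {c y₁ y₂ : K}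
    (hc : c ≠ 0) (h₁ : v n + v n + v c < v y₁) (h₂ : v n + v n + v c < v y₂) :
    ∃ w, w ≠ 0 ∧ c + y₁ = w ^ n * (c + y₂) := by
  have hvc : v c ≠ ⊤ := v.ne_top_iff.mpr hc
  have hcy : ∀ {y}, v n + v n + v c < v y → v (c + y) = v c := fun h =>
    v.map_add_eq_of_lt_left (lt_of_le_of_lt (le_add_of_nonneg_left
      (add_nonneg (v.map_natCast_nonneg n) (v.map_natCast_nonneg n))) h)
  have hcy₁ : c + y₁ ≠ 0 := v.ne_top_iff.mp (hcy h₁ ▸ hvc)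
  have hcy₂ : c + y₂ ≠ 0 := v.ne_top_iff.mp (hcy h₂ ▸ hvc)
  set u := (c + y₁) / (c + y₂)
  have hu : v n + v n < v (u - 1) := by
    have hmul : (u - 1) * (c + y₂) = y₁ - y₂ := by rw [sub_mul, div_mul_cancel₀ _ hcy₂]; ring
    refine (WithTop.add_lt_add_iff_right hvc).mp ?_
    calc v n + v n + v c < v (y₁ - y₂) := (lt_min h₁ h₂).trans_le (v.map_sub _ _)
      _ = v (u - 1) + v c := by rw [← hmul, map_mul, hcy h₂]
  obtain ⟨w, hw⟩ := exists_pow_eq_of_lt_map_sub_one hv hn hu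
  have hn0 : n ≠ 0 := by rintro rfl; simp at hn
  exact ⟨w, ne_zero_pow hn0 (hw ▸ div_ne_zero hcy₁ hcy₂), by rw [hw, div_mul_cancel₀ _ hcy₂]⟩

theorem intCast_le_map_inv {x : K} {k : ℤ} (h : v x ≤ ((-k : ℤ) : WithTop ℤ)) :
    (k : WithTop ℤ) ≤ v x⁻¹ := by
  induction hx : v x with
  | top => simp [hx] at h
  | coe z =>
    rw [hx] at h
    rw [v.map_inv, hx, ← WithTop.LinearOrderedAddCommGroup.coe_neg]
    exact WithTop.coe_le_coe.mpr (by have := WithTop.coe_le_coe.mp h; omega)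

theorem exists_eval_eq_pow_mul_eval_of_le_map (hv : v.IsComplete) {n : ℕ} (hn : (n : K) ≠ 0)
    {Q : Polynomial K} (hQ : Q ≠ 0) :
    ∃ k : ℤ, ∀ x₁ x₂ : K, (k : WithTop ℤ) ≤ v x₁ → (k : WithTop ℤ) ≤ v x₂ →
      (∃ s, s ≠ 0 ∧ x₁ = s ^ n * x₂) → ∃ s, s ≠ 0 ∧ Q.eval x₁ = s ^ n * Q.eval x₂ := by
  obtain ⟨m, c, T, hc, hQ⟩ := Polynomial.exists_eval_eq_pow_mul_add hQ
  have hvn : v n ≠ ⊤ := v.ne_top_iff.mpr hn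
  obtain ⟨γ, hγ⟩ := WithTop.ne_top_iff_exists.mp
    (WithTop.add_ne_top.mpr ⟨WithTop.add_ne_top.mpr ⟨hvn, hvn⟩, v.ne_top_iff.mpr hc⟩)
  obtain ⟨k, hk⟩ := v.exists_lt_map_mul_eval T γ
  refine ⟨k, fun x₁ x₂ h₁ h₂ ⟨s, hs, hx⟩ => ?_⟩
  obtain ⟨w, hw, hcw⟩ := exists_add_eq_pow_mul_add hv hn hc (hγ ▸ hk x₁ h₁) (hγ ▸ hk x₂ h₂)
  refine ⟨s ^ m * w, mul_ne_zero (pow_ne_zero m hs) hw, ?_⟩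
  rw [hQ, hQ, hcw, hx]
  ring

theorem exists_eval_eq_pow_mul_eval_of_map_le (hv : v.IsComplete) {n : ℕ} (hn : (n : K) ≠ 0)
    {P : Polynomial K} (hP : P ≠ 0) :
    ∃ k : ℤ, ∀ t₁ t₂ : K, v t₁ ≤ (k : WithTop ℤ) → v t₂ ≤ (k : WithTop ℤ) →
      (∃ s, s ≠ 0 ∧ t₁⁻¹ = s ^ n * t₂⁻¹) → ∃ s, s ≠ 0 ∧ P.eval t₁ = s ^ n * P.eval t₂ := by
  obtain ⟨k, hk⟩ :=
    exists_eval_eq_pow_mul_eval_of_le_map hv hn (Polynomial.reverse_eq_zero.not.mpr hP)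
  have hne : ∀ {t : K}, v t ≤ ((-k : ℤ) : WithTop ℤ) → t ≠ 0 := fun ht =>
    v.ne_top_iff.mp (ne_top_of_le_ne_top WithTop.coe_ne_top ht)
  refine ⟨-k, fun t₁ t₂ h₁ h₂ ⟨s, hs, hst⟩ => ?_⟩
  obtain ⟨r, hr, hrev⟩ := hk _ _ (intCast_le_map_inv h₁) (intCast_le_map_inv h₂) ⟨s, hs, hst⟩
  have ht : t₁ = s⁻¹ ^ n * t₂ := by rw [← inv_inv t₁, hst, mul_inv, inv_inv, inv_pow]
  refine ⟨s⁻¹ ^ P.natDegree * r, mul_ne_zero (pow_ne_zero _ (inv_ne_zero hs)) hr, ?_⟩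
  rw [P.eval_eq_pow_mul_eval_reverse (hne h₁), P.eval_eq_pow_mul_eval_reverse (hne h₂), hrev, ht]
  ring

end AddValuation

namespace IsLocalField

variable {K : Type*} [Field K] {v : K → WithTop ℤ}

theorem map_one (hK : IsLocalField v) : v 1 = 0 := by
  obtain ⟨z, hz⟩ := WithTop.ne_top_iff_exists.mp (hK.ne_top 1 one_ne_zero)
  have h := hK.map_mul 1 1
  rw [mul_one, ← hz, ← WithTop.coe_add, WithTop.coe_eq_coe] at h
  rw [← hz]
  exact_mod_cast (by omega : z = 0)

def toAddValuation (hK : IsLocalField v) : AddValuation K (WithTop ℤ) :=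
  AddValuation.of v hK.map_zero hK.map_one hK.min_le_add hK.map_mul

theorem isComplete_toAddValuation (hK : IsLocalField v) : hK.toAddValuation.IsComplete :=
  hK.complete

end IsLocalField

/-- Let `K` be a local field and `n` a positive integer with `char K ∤ n`.
Let `P ∈ K[t]` be a nonzero polynomial. Then for every `t₀ ∈ ℙ¹(K)` there is a punctured
neighbourhood `U_{t₀}` of `t₀` such that, for all `t ∈ U_{t₀}` with `P(t) ≠ 0`, the class
of `P(t)` in `K^*/(K^*)^n` depends only on the class of `t − t₀` in `K^*/(K^*)^n`
(with `1/t` in place of `t − t₀` when `t₀ = ∞`). -/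
theorem stmt3 {K : Type*} [Field K] (v : K → WithTop ℤ) (hK : IsLocalField v)
    (n : ℕ) (hn : 0 < n) (hchar : ringChar K = 0 ∨ ¬ (ringChar K ∣ n))
    (P : Polynomial K) (hP : P ≠ 0) :
    (∀ t₀ : K, ∃ k : ℤ, ∀ t₁ t₂ : K, t₁ ≠ t₀ → t₂ ≠ t₀ →
        (k : WithTop ℤ) ≤ v (t₁ - t₀) → (k : WithTop ℤ) ≤ v (t₂ - t₀) →
        P.eval t₁ ≠ 0 → P.eval t₂ ≠ 0 →
        (∃ s : K, s ≠ 0 ∧ t₁ - t₀ = s ^ n * (t₂ - t₀)) →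
        ∃ s : K, s ≠ 0 ∧ P.eval t₁ = s ^ n * P.eval t₂)
    ∧ (∃ k : ℤ, ∀ t₁ t₂ : K, v t₁ ≤ (k : WithTop ℤ) → v t₂ ≤ (k : WithTop ℤ) →
        P.eval t₁ ≠ 0 → P.eval t₂ ≠ 0 →
        (∃ s : K, s ≠ 0 ∧ t₁⁻¹ = s ^ n * t₂⁻¹) →
        ∃ s : K, s ≠ 0 ∧ P.eval t₁ = s ^ n * P.eval t₂) := by
  have hnK : (n : K) ≠ 0 := fun h => by
    have hdvd := (ringChar.spec K n).mp h
    rcases hchar with h0 | hndvd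
    · exact hn.ne' (zero_dvd_iff.mp (h0 ▸ hdvd))
    · exact hndvd hdvd
  have hv := hK.isComplete_toAddValuation
  refine ⟨fun t₀ => ?_, ?_⟩
  · obtain ⟨k, hk⟩ := hK.toAddValuation.exists_eval_eq_pow_mul_eval_of_le_map hv hnK
      (Polynomial.comp_X_add_C_ne_zero_iff.mpr hP : P.comp (.X + .C t₀) ≠ 0)
    exact ⟨k, fun t₁ t₂ _ _ h₁ h₂ _ _ hs => by simpa using hk _ _ h₁ h₂ hs⟩
  · obtain ⟨k, hk⟩ := hK.toAddValuation.exists_eval_eq_pow_mul_eval_of_map_le hv hnK hP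
    exact ⟨k, fun t₁ t₂ h₁ h₂ _ _ => hk t₁ t₂ h₁ h₂⟩
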